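/- The map Φ : A × A* → A*, Φ(a,μ) = exp(L_a*)(μ), is an action of the additive group (A,+): Φ(0,μ) = μ and Φ(a+b,μ) = Φ(a,Φ(b,μ)) for all a,b ∈ A and μ ∈ A*. Moreover, for each fixed μ the map a ↦ Φ(a,μ) is differentiable and its Fréchet derivative at any a ∈ A sends u ∈ A to L_u*(Φ(a,μ)); consequently the image of this derivative equals the subspace {L_u*(ν) : u ∈ A} of A*, where ν = Φ(a,μ). (Part of Theorem 'main', Section 7: the orbits of Φ are tangent to the distribution ν ↦ {L_u*(ν) : u ∈ A}.) -/

import Mathlib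

/-!
Statement 1: The map `Φ(a,μ) = exp(L_a*)(μ)` is an action of the additive group
`(A,+)` on `A*`; for fixed `μ` the map `a ↦ Φ(a,μ)` is differentiable with
Fréchet derivative at `a` sending `u` to `L_u*(Φ(a,μ))`, and the image of this
derivative is `{L_u*(ν) : u ∈ A}` where `ν = Φ(a,μ)`.
-/

set_option synthInstance.maxHeartbeats 400000

noncomputable section

variable {A : Type*} [NormedAddCommGroup A] [NormedSpace ℝ A]

/-- The transpose `L_a*` of left multiplication `L_a`, applied to `μ ∈ A*`. -/
def Lstar (mul : A →L[ℝ] A →L[ℝ] A) (a : A) (μ : A →L[ℝ] ℝ) : A →L[ℝ] ℝ :=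
  μ.comp (mul a)

/-- The transpose `L_a*` as a continuous linear endomorphism of `A*`. -/
def LstarL (mul : A →L[ℝ] A →L[ℝ] A) (a : A) : (A →L[ℝ] ℝ) →L[ℝ] (A →L[ℝ] ℝ) :=
  (ContinuousLinearMap.compL ℝ A A ℝ).flip (mul a)

/-- The operator-norm topology on `(A →L[ℝ] ℝ) →L[ℝ] (A →L[ℝ] ℝ)` makes it a
topological ring (recorded as an instance so that `NormedSpace.exp` applies). -/
noncomputable instance : IsTopologicalRing ((A →L[ℝ] ℝ) →L[ℝ] (A →L[ℝ] ℝ)) := by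
  letI R : NormedRing ((A →L[ℝ] ℝ) →L[ℝ] (A →L[ℝ] ℝ)) := ContinuousLinearMap.toNormedRing
  letI S : NonUnitalSeminormedRing ((A →L[ℝ] ℝ) →L[ℝ] (A →L[ℝ] ℝ)) := inferInstance
  exact @NonUnitalSeminormedRing.toIsTopologicalRing _ S

/-- `Φ(a,μ) = exp(L_a*)(μ)`. -/
def Phi (mul : A →L[ℝ] A →L[ℝ] A) (a : A) (μ : A →L[ℝ] ℝ) : A →L[ℝ] ℝ :=
  (NormedSpace.exp (LstarL mul a)) μ

/-- The claimed Fréchet derivative of `a ↦ Φ(a,μ)` at `a`: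
the continuous linear map `u ↦ L_u*(ν)` with `ν = Φ(a,μ)`. -/
def PhiDeriv (mul : A →L[ℝ] A →L[ℝ] A) (ν : A →L[ℝ] ℝ) : A →L[ℝ] (A →L[ℝ] ℝ) :=
  ((ContinuousLinearMap.compL ℝ A A ℝ) ν).comp mul

set_option linter.unusedSectionVars false

lemma LstarL_add (mul : A →L[ℝ] A →L[ℝ] A) (a b : A) :
    LstarL mul (a + b) = LstarL mul a + LstarL mul b := by
  simp [LstarL]

lemma LstarL_commute (mul : A →L[ℝ] A →L[ℝ] A)
    (hcomm : ∀ a b : A, mul a b = mul b a)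
    (hassoc : ∀ a b c : A, mul (mul a b) c = mul a (mul b c)) (a b : A) :
    LstarL mul a * LstarL mul b = LstarL mul b * LstarL mul a := by
  refine ContinuousLinearMap.ext fun μ => ContinuousLinearMap.ext fun x => ?_
  simp only [ContinuousLinearMap.mul_apply, LstarL, ContinuousLinearMap.flip_apply,
    ContinuousLinearMap.compL_apply, ContinuousLinearMap.comp_apply]
  rw [← hassoc, hcomm b a, hassoc]

/-- `a ↦ LstarL mul a` as a continuous linear map. -/
def LstarLc (mul : A →L[ℝ] A →L[ℝ] A) : A →L[ℝ] ((A →L[ℝ] ℝ) →L[ℝ] (A →L[ℝ] ℝ)) :=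
  ((ContinuousLinearMap.compL ℝ A A ℝ).flip).comp mul

lemma LstarLc_apply (mul : A →L[ℝ] A →L[ℝ] A) (a : A) : LstarLc mul a = LstarL mul a := rfl

lemma Phi_zero (mul : A →L[ℝ] A →L[ℝ] A) (μ : A →L[ℝ] ℝ) : Phi mul 0 μ = μ := by
  have h : LstarL mul (0 : A) = 0 := by simp [LstarL]
  rw [Phi, h, NormedSpace.exp_zero]
  rfl

set_option maxHeartbeats 1000000 in
lemma Phi_add [FiniteDimensional ℝ A] (mul : A →L[ℝ] A →L[ℝ] A)
    (hcomm : ∀ a b : A, mul a b = mul b a)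
    (hassoc : ∀ a b c : A, mul (mul a b) c = mul a (mul b c))
    (a b : A) (μ : A →L[ℝ] ℝ) : Phi mul (a + b) μ = Phi mul a (Phi mul b μ) := by
  have key := @NormedSpace.exp_add_of_commute ((A →L[ℝ] ℝ) →L[ℝ] (A →L[ℝ] ℝ))
    ContinuousLinearMap.toNormedRing (NormedAlgebra.restrictScalars ℚ ℝ _) _
    (LstarL mul a) (LstarL mul b) (LstarL_commute mul hcomm hassoc a b)
  rw [Phi, Phi, Phi, LstarL_add]
  exact DFunLike.congr_fun key μ

set_option maxHeartbeats 1000000 in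
lemma Phi_hasFDerivAt_zero [FiniteDimensional ℝ A] (mul : A →L[ℝ] A →L[ℝ] A)
    (ν : A →L[ℝ] ℝ) :
    HasFDerivAt (fun y : A => Phi mul y ν) (PhiDeriv mul ν) 0 := by
  have hexp := @hasFDerivAt_exp_zero ℝ ((A →L[ℝ] ℝ) →L[ℝ] (A →L[ℝ] ℝ)) _
    ContinuousLinearMap.toNormedRing ContinuousLinearMap.toNormedAlgebra _
  have hexp' : HasFDerivAt (𝕜 := ℝ)
      (@NormedSpace.exp ((A →L[ℝ] ℝ) →L[ℝ] (A →L[ℝ] ℝ)) _ _ _)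
      (1 : ((A →L[ℝ] ℝ) →L[ℝ] (A →L[ℝ] ℝ)) →L[ℝ] ((A →L[ℝ] ℝ) →L[ℝ] (A →L[ℝ] ℝ)))
      (LstarLc mul (0 : A)) := by
    rw [map_zero]; exact hexp
  have hlin : HasFDerivAt (⇑(LstarLc mul)) (LstarLc mul) (0 : A) :=
    by fun_prop
  have hcomp := HasFDerivAt.comp (𝕜 := ℝ) (E := A) (F := (A →L[ℝ] ℝ) →L[ℝ] (A →L[ℝ] ℝ)) (G := (A →L[ℝ] ℝ) →L[ℝ] (A →L[ℝ] ℝ)) (f := ⇑(LstarLc mul))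
      (0 : A) hexp' hlin
  have heval := ((ContinuousLinearMap.apply ℝ (A →L[ℝ] ℝ) ν).hasFDerivAt).comp (0 : A) hcomp
  have hD : PhiDeriv mul ν = (ContinuousLinearMap.apply ℝ (A →L[ℝ] ℝ) ν).comp
      ((1 : ((A →L[ℝ] ℝ) →L[ℝ] (A →L[ℝ] ℝ)) →L[ℝ]
        ((A →L[ℝ] ℝ) →L[ℝ] (A →L[ℝ] ℝ))).comp (LstarLc mul)) := by
    ext u x; rfl
  rw [hD]
  exact heval

theorem stmt1 [FiniteDimensional ℝ A] (mul : A →L[ℝ] A →L[ℝ] A)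
    (hcomm : ∀ a b : A, mul a b = mul b a)
    (hassoc : ∀ a b c : A, mul (mul a b) c = mul a (mul b c)) :
    (∀ μ : A →L[ℝ] ℝ, Phi mul 0 μ = μ)
    ∧
    (∀ (a b : A) (μ : A →L[ℝ] ℝ), Phi mul (a + b) μ = Phi mul a (Phi mul b μ))
    ∧
    (∀ (a : A) (μ : A →L[ℝ] ℝ),
      (∀ u : A, PhiDeriv mul (Phi mul a μ) u = Lstar mul u (Phi mul a μ))
      ∧ HasFDerivAt (fun x : A => Phi mul x μ) (PhiDeriv mul (Phi mul a μ)) a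
      ∧ Set.range (⇑(PhiDeriv mul (Phi mul a μ)))
          = {x : A →L[ℝ] ℝ | ∃ u : A, x = Lstar mul u (Phi mul a μ)}) := by
  refine ⟨Phi_zero mul, Phi_add mul hcomm hassoc, fun a μ => ?_⟩
  set ν := Phi mul a μ with hν
  have hpt : ∀ u : A, PhiDeriv mul ν u = Lstar mul u ν := fun u => rfl
  refine ⟨hpt, ?_, ?_⟩
  · have hfun : (fun x : A => Phi mul x μ) = fun x : A => Phi mul (x - a) ν := by
      funext x
      rw [hν, ← Phi_add mul hcomm hassoc, sub_add_cancel]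
    rw [hfun]
    have h0' : HasFDerivAt (fun y : A => Phi mul y ν) (PhiDeriv mul ν) (a - a) := by
      rw [sub_self]; exact Phi_hasFDerivAt_zero mul ν
    have hcomp2 := HasFDerivAt.comp (g := fun y : A => Phi mul y ν)
      (f := fun x : A => x - a) a h0' (hasFDerivAt_sub_const a)
    simpa [Function.comp_def] using hcomp2
  · ext x
    constructor
    · rintro ⟨u, rfl⟩; exact ⟨u, rfl⟩
    · rintro ⟨u, rfl⟩; exact ⟨u, rfl⟩

end
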